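/- Let I=(0,1), 0<b<1, σ₁>0, σ₂<0 with |σ₂|/σ₁ = (1-b)/b. Let A: H¹₀(I) → H⁻¹(I) be defined by ⟨Au,v⟩ = ∫₀^b σ₁ u'v' + ∫_b^1 σ₂ u'v'. Then ker(A) = span{φ}, where φ(x)=x/b on (0,b) and φ(x)=(1-x)/(1-b) on (b,1). -/

import Mathlib

/-!
With `σ = σ₁` on `(0,b)` and `σ = σ₂` on `(b,1)`, `u` lies in the kernel iff `σ u'` is
`L²`-orthogonal to every mean-zero function, i.e. iff `σ u'` is a.e. constant (test against
`σ u'` minus its mean). In the critical case `σ φ'` is the nonzero constant `σ₁ / b`, and `σ`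
never vanishes, so `σ u'` is constant exactly when `u'` is a multiple of `φ'`.
-/

open MeasureTheory Set Real

noncomputable section

/-- Membership in `H¹₀(0,1)`, represented through the weak derivative `g`. -/
def memH10 (g : ℝ → ℝ) : Prop :=
  MemLp g 2 (volume.restrict (Ioo (0:ℝ) 1)) ∧ (∫ t in Ioo (0:ℝ) 1, g t) = 0

/-- The sign-changing bilinear form, expressed through weak derivatives. -/
def aform (b σ₁ σ₂ : ℝ) (g h : ℝ → ℝ) : ℝ :=
  (∫ x in Ioo (0:ℝ) b, σ₁ * g x * h x) + ∫ x in Ioo b 1, σ₂ * g x * h x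

/-- Weak derivative of the interface profile `φ` (`φ(x)=x/b` on `(0,b)`,
`φ(x)=(1-x)/(1-b)` on `(b,1)`). -/
def phiDeriv (b : ℝ) (x : ℝ) : ℝ := if x < b then 1 / b else -(1 / (1 - b))

section MeanZeroOrthogonal

variable {α : Type*} [MeasurableSpace α] {μ : Measure α} [IsFiniteMeasure μ] {w : α → ℝ}

theorem ae_eq_average_of_forall_integral_mul_eq_zero (hw : MemLp w 2 μ)
    (h : ∀ v, MemLp v 2 μ → ∫ x, v x ∂μ = 0 → ∫ x, w x * v x ∂μ = 0) :
    w =ᵐ[μ] fun _ => ⨍ x, w x ∂μ := by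
  set m := ⨍ x, w x ∂μ
  have hv : MemLp (fun x => w x - m) 2 μ := hw.sub (memLp_const m)
  have hv_mean : ∫ x, (w x - m) ∂μ = 0 := integral_sub_average μ w
  have hwv : Integrable (fun x => w x * (w x - m)) μ := hw.integrable_mul hv
  have hsq : ∫ x, (w x - m) * (w x - m) ∂μ = 0 :=
    calc ∫ x, (w x - m) * (w x - m) ∂μ
        = ∫ x, w x * (w x - m) ∂μ - m * ∫ x, (w x - m) ∂μ := by
          rw [← integral_const_mul, ← integral_sub hwv ((hv.integrable one_le_two).const_mul m)]
          congr with x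
          ring
      _ = 0 := by rw [h _ hv hv_mean, hv_mean, mul_zero, sub_zero]
  filter_upwards [(integral_eq_zero_iff_of_nonneg (fun x => mul_self_nonneg _)
    (hv.integrable_mul hv)).1 hsq] with x hx
  exact sub_eq_zero.1 (mul_self_eq_zero.1 hx)

theorem forall_integral_mul_eq_zero_iff_ae_eq_const (hw : MemLp w 2 μ) :
    (∀ v, MemLp v 2 μ → ∫ x, v x ∂μ = 0 → ∫ x, w x * v x ∂μ = 0) ↔
      ∃ c : ℝ, w =ᵐ[μ] fun _ => c := by
  refine ⟨fun h => ⟨_, ae_eq_average_of_forall_integral_mul_eq_zero hw h⟩, ?_⟩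
  rintro ⟨c, hc⟩ v - hv
  calc ∫ x, w x * v x ∂μ = ∫ x, c * v x ∂μ :=
        integral_congr_ae (by filter_upwards [hc] with x hx; rw [hx])
    _ = 0 := by rw [integral_const_mul, hv, mul_zero]

end MeanZeroOrthogonal

theorem exists_mul_ae_eq_const_iff {α : Type*} [MeasurableSpace α] {μ : Measure α}
    {k φ g : α → ℝ} {K : ℝ} (hk : ∀ x, k x ≠ 0) (hK : K ≠ 0) (hkφ : ∀ x, k x * φ x = K) :
    (∃ m : ℝ, (fun x => k x * g x) =ᵐ[μ] fun _ => m) ↔ ∃ c : ℝ, g =ᵐ[μ] fun x => c * φ x := by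
  constructor
  · rintro ⟨m, hm⟩
    refine ⟨m / K, ?_⟩
    filter_upwards [hm] with x hx
    apply mul_left_cancel₀ (hk x)
    rw [hx, mul_left_comm, hkφ x, div_mul_cancel₀ _ hK]
  · rintro ⟨c, hc⟩
    refine ⟨c * K, ?_⟩
    filter_upwards [hc] with x hx
    rw [hx, mul_left_comm, hkφ x]

theorem setIntegral_Ioo_eq_add {E : Type*} [NormedAddCommGroup E] [NormedSpace ℝ E]
    {μ : Measure ℝ} [NullSingletonClass μ] {f : ℝ → E} {a b c : ℝ} (hab : a ≤ b) (hbc : b ≤ c)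
    (hf : IntegrableOn f (Ioo a c) μ) :
    ∫ x in Ioo a c, f x ∂μ = (∫ x in Ioo a b, f x ∂μ) + ∫ x in Ioo b c, f x ∂μ := by
  have hf' : IntegrableOn f (Ioc a c) μ := by rwa [integrableOn_Ioc_iff_integrableOn_Ioo]
  simp only [← integral_Ioc_eq_integral_Ioo]
  rw [← Ioc_union_Ioc_eq_Ioc hab hbc, setIntegral_union (Ioc_disjoint_Ioc_of_le le_rfl)
    measurableSet_Ioc (hf'.mono_set (Ioc_subset_Ioc_right hbc))
    (hf'.mono_set (Ioc_subset_Ioc_left hab))]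

def sigmaCoeff (b σ₁ σ₂ x : ℝ) : ℝ := if x < b then σ₁ else σ₂

theorem memLp_sigmaCoeff_mul {μ : Measure ℝ} {b σ₁ σ₂ : ℝ} {g : ℝ → ℝ} (hg : MemLp g 2 μ) :
    MemLp (fun x => sigmaCoeff b σ₁ σ₂ x * g x) 2 μ := by
  refine hg.mul' (memLp_top_of_bound ?_ (max |σ₁| |σ₂|) (ae_of_all _ fun x => ?_))
  · exact (measurable_const.ite measurableSet_Iio measurable_const).aestronglyMeasurable
  · unfold sigmaCoeff
    split_ifs
    · exact le_max_left _ _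
    · exact le_max_right _ _

theorem aform_eq_integral_sigmaCoeff {b σ₁ σ₂ : ℝ} (hb : b ∈ Ioo (0:ℝ) 1) {g v : ℝ → ℝ}
    (hg : MemLp g 2 (volume.restrict (Ioo (0:ℝ) 1)))
    (hv : MemLp v 2 (volume.restrict (Ioo (0:ℝ) 1))) :
    aform b σ₁ σ₂ g v = ∫ x in Ioo (0:ℝ) 1, sigmaCoeff b σ₁ σ₂ x * g x * v x := by
  have hint : IntegrableOn (fun x => sigmaCoeff b σ₁ σ₂ x * g x * v x) (Ioo 0 1) :=
    (memLp_sigmaCoeff_mul hg).integrable_mul hv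
  rw [setIntegral_Ioo_eq_add hb.1.le hb.2.le hint, aform]
  congr 1
  · refine setIntegral_congr_fun measurableSet_Ioo fun x hx => ?_
    simp only [sigmaCoeff, if_pos hx.2]
  · refine setIntegral_congr_fun measurableSet_Ioo fun x hx => ?_
    simp only [sigmaCoeff, if_neg (not_lt.2 hx.1.le)]

theorem sigmaCoeff_mul_phiDeriv {b σ₁ σ₂ : ℝ} (hcrit : σ₂ / (1 - b) = -(σ₁ / b)) (x : ℝ) :
    sigmaCoeff b σ₁ σ₂ x * phiDeriv b x = σ₁ / b := by
  unfold sigmaCoeff phiDeriv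
  split_ifs
  · rw [mul_one_div]
  · rw [mul_neg, mul_one_div, hcrit, neg_neg]

/-- In the critical contrast case `|σ₂|/σ₁ = (1-b)/b`, the kernel of the
operator `A` associated with the sign-changing form is spanned by `φ`. -/
theorem stmt1 (b σ₁ σ₂ : ℝ) (hb : b ∈ Ioo (0:ℝ) 1) (h1 : 0 < σ₁) (h2 : σ₂ < 0)
    (hcrit : |σ₂| / σ₁ = (1 - b) / b) :
    ∀ g, memH10 g →
      ((∀ v, memH10 v → aform b σ₁ σ₂ g v = 0) ↔
        ∃ c : ℝ, g =ᵐ[volume.restrict (Ioo (0:ℝ) 1)] fun x => c * phiDeriv b x) := by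
  intro g hg
  have hb0 : b ≠ 0 := hb.1.ne'
  have hb1 : 1 - b ≠ 0 := by linarith [hb.2]
  have hcrit' : σ₂ / (1 - b) = -(σ₁ / b) := by
    rw [abs_of_neg h2, div_eq_div_iff h1.ne' hb0] at hcrit
    field_simp
    linarith
  have hσ_ne : ∀ x, sigmaCoeff b σ₁ σ₂ x ≠ 0 := fun x => by
    unfold sigmaCoeff; split_ifs <;> linarith
  calc (∀ v, memH10 v → aform b σ₁ σ₂ g v = 0)
      ↔ ∀ v, MemLp v 2 (volume.restrict (Ioo (0:ℝ) 1)) → ∫ x in Ioo (0:ℝ) 1, v x = 0 →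
          ∫ x in Ioo (0:ℝ) 1, sigmaCoeff b σ₁ σ₂ x * g x * v x = 0 := by
        simp only [memH10, and_imp]
        exact forall₂_congr fun v hv => by rw [aform_eq_integral_sigmaCoeff hb hg.1 hv]
    _ ↔ ∃ m : ℝ,
          (fun x => sigmaCoeff b σ₁ σ₂ x * g x) =ᵐ[volume.restrict (Ioo (0:ℝ) 1)] fun _ => m :=
        forall_integral_mul_eq_zero_iff_ae_eq_const (memLp_sigmaCoeff_mul hg.1)
    _ ↔ _ := exists_mul_ae_eq_const_iff hσ_ne (div_ne_zero h1.ne' hb0)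
        (sigmaCoeff_mul_phiDeriv hcrit')

end
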